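/- Let n ≥ 2. A permutation π of {1,...,n} avoids the four patterns 12-3 (no i, i+1 < k with π(i) < π(i+1) < π(k)), 2-13 (no i < j with π(j) < π(i) < π(j+1)), 2-31 (no i < j with π(j+1) < π(i) < π(j)), and 32-1 (no i, i+1 < k with π(k) < π(i+1) < π(i)) if and only if π is one of the two alternating permutations 1 n 2 (n−1) 3 (n−2) ... or n 1 (n−1) 2 (n−2) 3 .... In particular, there are exactly 2 such permutations of each length n ≥ 2. -/

import Mathlib

/-!
Complementing the values, `π i ↦ n - 1 - π i`, exchanges 12-3 with 32-1 and 2-13 with 2-31, so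
we may assume `π 0 < π 1`. Avoiding 2-31 then puts `π 0` below every later value, and by induction
each `π (i + 1)` is above every later value after an ascent (no 12-3) and below every later value
after a descent (no 32-1). Hence for `i < j` we have `π i < π j` exactly when `i` is even. This
fixes the relative order of all values, hence `π`, and the alternating permutation has it.
-/

open Equiv

theorem Equiv.Perm.eq_of_lt_iff_lt {α : Type*} [LinearOrder α] [WellFoundedLT α] {π σ : Perm α}
    (h : ∀ i j, π i < π j ↔ σ i < σ j) : π = σ := by
  have hmono : StrictMono (π ∘ σ.symm) := fun x y hxy => by
    simpa [h] using hxy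
  have hid : π ∘ σ.symm = id :=
    (hmono.range_inj strictMono_id).mp (by simp [Set.range_comp, Set.range_id])
  ext i
  simpa using congrFun hid (σ i)

section

variable {n : ℕ} {π : Perm (Fin n)}

def Avoids12_3 (π : Perm (Fin n)) : Prop :=
  ¬ ∃ (i k : Fin n) (h : (i : ℕ) + 1 < n),
    (i : ℕ) + 1 < (k : ℕ) ∧ π i < π ⟨(i : ℕ) + 1, h⟩ ∧ π ⟨(i : ℕ) + 1, h⟩ < π k

def Avoids2_13 (π : Perm (Fin n)) : Prop :=
  ¬ ∃ (i j : Fin n) (h : (j : ℕ) + 1 < n), i < j ∧ π j < π i ∧ π i < π ⟨(j : ℕ) + 1, h⟩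

def Avoids2_31 (π : Perm (Fin n)) : Prop :=
  ¬ ∃ (i j : Fin n) (h : (j : ℕ) + 1 < n), i < j ∧ π ⟨(j : ℕ) + 1, h⟩ < π i ∧ π i < π j

def Avoids32_1 (π : Perm (Fin n)) : Prop :=
  ¬ ∃ (i k : Fin n) (h : (i : ℕ) + 1 < n),
    (i : ℕ) + 1 < (k : ℕ) ∧ π k < π ⟨(i : ℕ) + 1, h⟩ ∧ π ⟨(i : ℕ) + 1, h⟩ < π i

def AvoidsPatterns (π : Perm (Fin n)) : Prop :=
  Avoids12_3 π ∧ Avoids2_13 π ∧ Avoids2_31 π ∧ Avoids32_1 π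

theorem Avoids12_3.lt_of_ascent (h : Avoids12_3 π) {i k : Fin n} (hi : (i : ℕ) + 1 < n)
    (hasc : π i < π ⟨i + 1, hi⟩) (hk : (i : ℕ) + 1 < k) : π k < π ⟨i + 1, hi⟩ :=
  lt_of_le_of_ne (not_lt.mp fun hlt => h ⟨i, k, hi, hk, hasc, hlt⟩)
    (π.injective.ne (by simp only [ne_eq, Fin.ext_iff]; omega))

theorem Avoids32_1.lt_of_descent (h : Avoids32_1 π) {i k : Fin n} (hi : (i : ℕ) + 1 < n)
    (hdes : π ⟨i + 1, hi⟩ < π i) (hk : (i : ℕ) + 1 < k) : π ⟨i + 1, hi⟩ < π k :=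
  lt_of_le_of_ne (not_lt.mp fun hlt => h ⟨i, k, hi, hk, hlt, hdes⟩)
    (π.injective.ne (by simp only [ne_eq, Fin.ext_iff]; omega))

theorem Avoids2_31.lt_of_ascent (h : Avoids2_31 π) {i : Fin n} (hi : (i : ℕ) + 1 < n)
    (hasc : π i < π ⟨i + 1, hi⟩) {k : Fin n} (hk : i < k) : π i < π k := by
  suffices ∀ m (hm : m < n), (i : ℕ) < m → π i < π ⟨m, hm⟩ from this k k.isLt hk
  intro m
  induction m with
  | zero => intro _ h0; omega
  | succ m ih =>
    intro hm him
    rcases (Nat.lt_succ_iff.mp him).eq_or_lt with rfl | hlt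
    · exact hasc
    · have hprev := ih (by omega) hlt
      exact lt_of_le_of_ne (not_lt.mp fun hnext => h ⟨i, ⟨m, by omega⟩, hm, hlt, hnext, hprev⟩)
        (π.injective.ne (by simp only [ne_eq, Fin.ext_iff]; omega))

def complement (π : Perm (Fin n)) : Perm (Fin n) := π.trans Fin.revPerm

@[simp]
theorem complement_apply (π : Perm (Fin n)) (i : Fin n) : complement π i = (π i).rev := rfl

theorem complement_involutive : Function.Involutive (complement (n := n)) := fun π => by
  ext i; simp

theorem avoidsPatterns_complement : AvoidsPatterns (complement π) ↔ AvoidsPatterns π := by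
  simp only [AvoidsPatterns, Avoids12_3, Avoids2_13, Avoids2_31, Avoids32_1, complement_apply,
    Fin.rev_lt_rev]
  constructor <;> rintro ⟨h123, h213, h231, h321⟩ <;> refine ⟨?_, ?_, ?_, ?_⟩ <;>
    rintro ⟨i, k, hi, hik, h1, h2⟩
  exacts [h321 ⟨i, k, hi, hik, h2, h1⟩, h231 ⟨i, k, hi, hik, h2, h1⟩,
    h213 ⟨i, k, hi, hik, h2, h1⟩, h123 ⟨i, k, hi, hik, h2, h1⟩,
    h321 ⟨i, k, hi, hik, h2, h1⟩, h231 ⟨i, k, hi, hik, h2, h1⟩,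
    h213 ⟨i, k, hi, hik, h2, h1⟩, h123 ⟨i, k, hi, hik, h2, h1⟩]

def IsZigzag (π : Perm (Fin n)) : Prop :=
  ∀ ⦃i j : Fin n⦄, i < j → (π i < π j ↔ Even (i : ℕ))

theorem IsZigzag.lt_iff_not_even (hz : IsZigzag π) {i j : Fin n} (hij : i < j) :
    π j < π i ↔ ¬ Even (i : ℕ) := by
  rw [← hz hij]
  exact ⟨fun h => h.not_gt, (lt_or_gt_of_ne (π.injective.ne hij.ne)).resolve_left⟩

theorem IsZigzag.avoidsPatterns (hz : IsZigzag π) : AvoidsPatterns π := by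
  have lt_next (i : Fin n) (hi : (i : ℕ) + 1 < n) : i < ⟨i + 1, hi⟩ := Nat.lt_add_one _
  refine ⟨?_, ?_, ?_, ?_⟩
  · rintro ⟨i, k, hi, hik, h1, h2⟩
    exact Nat.even_add_one.mp ((hz hik).mp h2) ((hz (lt_next _ _)).mp h1)
  · rintro ⟨i, j, hj, hij, h1, h2⟩
    exact (hz.lt_iff_not_even hij).mp h1 ((hz (hij.trans (lt_next _ _))).mp h2)
  · rintro ⟨i, j, hj, hij, h1, h2⟩
    exact (hz.lt_iff_not_even (hij.trans (lt_next _ _))).mp h1 ((hz hij).mp h2)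
  · rintro ⟨i, k, hi, hik, h1, h2⟩
    exact (hz.lt_iff_not_even hik).mp h1
      (Nat.even_add_one.mpr ((hz.lt_iff_not_even (lt_next _ _)).mp h2))

theorem IsZigzag.eq (hπ : IsZigzag π) {σ : Perm (Fin n)} (hσ : IsZigzag σ) : π = σ :=
  Perm.eq_of_lt_iff_lt fun i j => by
    rcases lt_trichotomy i j with h | rfl | h
    · rw [hπ h, hσ h]
    · simp
    · rw [hπ.lt_iff_not_even h, hσ.lt_iff_not_even h]

theorem AvoidsPatterns.isZigzag (h : AvoidsPatterns π) (hn : 1 < n)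
    (h01 : π ⟨0, by omega⟩ < π ⟨1, hn⟩) : IsZigzag π := by
  obtain ⟨h123, -, h231, h321⟩ := h
  suffices ∀ i (hi : i < n) (j : Fin n), i < j → (π ⟨i, hi⟩ < π j ↔ Even i) from
    fun i j hij => this i i.isLt j hij
  intro i
  induction i with
  | zero =>
    exact fun _ j hj => iff_of_true (h231.lt_of_ascent hn h01 (Fin.mk_lt_mk.mpr hj)) Even.zero
  | succ i ih =>
    intro hi j hj
    have hstep := ih (by omega) ⟨i + 1, hi⟩ (by simp)
    by_cases heven : Even i
    · have hasc := hstep.mpr heven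
      exact iff_of_false (h123.lt_of_ascent (i := ⟨i, by omega⟩) hi hasc hj).not_gt
        (Nat.not_even_iff_odd.mpr heven.add_one)
    · have hdes : π ⟨i + 1, hi⟩ < π ⟨i, by omega⟩ :=
        (lt_or_gt_of_ne (π.injective.ne (by simp))).resolve_left (mt hstep.mp heven)
      exact iff_of_true (h321.lt_of_descent (i := ⟨i, by omega⟩) hi hdes hj)
        (Nat.not_even_iff_odd.mp heven).add_one

theorem avoidsPatterns_iff (hn : 1 < n) :
    AvoidsPatterns π ↔ IsZigzag π ∨ IsZigzag (complement π) := by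
  refine ⟨fun h => ?_, ?_⟩
  · rcases lt_or_gt_of_ne (π.injective.ne (show (⟨0, by omega⟩ : Fin n) ≠ ⟨1, hn⟩ by simp))
      with h01 | h10
    · exact .inl (h.isZigzag hn h01)
    · exact .inr ((avoidsPatterns_complement.mpr h).isZigzag hn (by simpa using h10))
  · rintro (hz | hz)
    · exact hz.avoidsPatterns
    · exact avoidsPatterns_complement.mp hz.avoidsPatterns

/-- The entry at position `i` of `1 n 2 (n-1) 3 …`, with positions and values counted from `0`. -/
def zigzag (n i : ℕ) : ℕ := if i % 2 = 0 then i / 2 else n - 1 - i / 2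

noncomputable def zigzagPerm (n : ℕ) : Perm (Fin n) :=
  Equiv.ofBijective (fun i => ⟨zigzag n i, by unfold zigzag; split_ifs <;> omega⟩) <|
    Finite.injective_iff_bijective.mp fun i j hij => by
      simp only [Fin.mk.injEq, zigzag] at hij
      ext
      split_ifs at hij <;> omega

theorem zigzagPerm_val (i : Fin n) : (zigzagPerm n i : ℕ) = zigzag n i := rfl

theorem isZigzag_zigzagPerm : IsZigzag (zigzagPerm n) := fun i j hij => by
  rw [Fin.lt_def] at hij ⊢
  rw [zigzagPerm_val, zigzagPerm_val, zigzag, zigzag, Nat.even_iff]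
  split_ifs <;> omega

theorem isZigzag_iff_eq_zigzagPerm : IsZigzag π ↔ π = zigzagPerm n :=
  ⟨fun hz => hz.eq isZigzag_zigzagPerm, fun h => h ▸ isZigzag_zigzagPerm⟩

theorem eq_zigzagPerm_iff : π = zigzagPerm n ↔ ∀ i : Fin n,
    ((i : ℕ) % 2 = 0 → (π i : ℕ) = (i : ℕ) / 2) ∧
      ((i : ℕ) % 2 = 1 → (π i : ℕ) = n - 1 - (i : ℕ) / 2) := by
  rw [Equiv.ext_iff]
  refine forall_congr' fun i => ?_
  rw [Fin.ext_iff, zigzagPerm_val, zigzag]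
  split_ifs <;> omega

theorem complement_eq_zigzagPerm_iff : complement π = zigzagPerm n ↔ ∀ i : Fin n,
    ((i : ℕ) % 2 = 0 → (π i : ℕ) = n - 1 - (i : ℕ) / 2) ∧
      ((i : ℕ) % 2 = 1 → (π i : ℕ) = (i : ℕ) / 2) := by
  rw [Equiv.ext_iff]
  refine forall_congr' fun i => ?_
  rw [Fin.ext_iff, zigzagPerm_val, zigzag, complement_apply, Fin.val_rev]
  have := (π i).isLt
  split_ifs <;> omega

theorem zigzagPerm_ne_complement (hn : 1 < n) : zigzagPerm n ≠ complement (zigzagPerm n) := by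
  intro h
  have h0 := congrArg (fun σ : Perm (Fin n) => (σ ⟨0, by omega⟩ : ℕ)) h
  simp only [zigzagPerm_val, zigzag, Nat.zero_mod, ↓reduceIte, Nat.zero_div, complement_apply,
    Fin.val_rev, zero_add] at h0
  omega

end

theorem stmt_16 (n : ℕ) (hn : 2 ≤ n) :
    (∀ π : Equiv.Perm (Fin n),
      ((¬ (∃ (i k : Fin n) (h : (i : ℕ) + 1 < n), (i : ℕ) + 1 < (k : ℕ) ∧ π i < π ⟨(i : ℕ) + 1, h⟩ ∧ π ⟨(i : ℕ) + 1, h⟩ < π k)) ∧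
      (¬ (∃ (i j : Fin n) (h : (j : ℕ) + 1 < n), i < j ∧ π j < π i ∧ π i < π ⟨(j : ℕ) + 1, h⟩)) ∧
      (¬ (∃ (i j : Fin n) (h : (j : ℕ) + 1 < n), i < j ∧ π ⟨(j : ℕ) + 1, h⟩ < π i ∧ π i < π j)) ∧
      (¬ (∃ (i k : Fin n) (h : (i : ℕ) + 1 < n), (i : ℕ) + 1 < (k : ℕ) ∧ π k < π ⟨(i : ℕ) + 1, h⟩ ∧ π ⟨(i : ℕ) + 1, h⟩ < π i)))
      ↔
      ((∀ i : Fin n, ((i : ℕ) % 2 = 0 → (π i : ℕ) = (i : ℕ) / 2) ∧ ((i : ℕ) % 2 = 1 → (π i : ℕ) = n - 1 - (i : ℕ) / 2)) ∨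
      (∀ i : Fin n, ((i : ℕ) % 2 = 0 → (π i : ℕ) = n - 1 - (i : ℕ) / 2) ∧ ((i : ℕ) % 2 = 1 → (π i : ℕ) = (i : ℕ) / 2)))) ∧
    Set.ncard {π : Equiv.Perm (Fin n) |
      (¬ (∃ (i k : Fin n) (h : (i : ℕ) + 1 < n), (i : ℕ) + 1 < (k : ℕ) ∧ π i < π ⟨(i : ℕ) + 1, h⟩ ∧ π ⟨(i : ℕ) + 1, h⟩ < π k)) ∧
      (¬ (∃ (i j : Fin n) (h : (j : ℕ) + 1 < n), i < j ∧ π j < π i ∧ π i < π ⟨(j : ℕ) + 1, h⟩)) ∧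
      (¬ (∃ (i j : Fin n) (h : (j : ℕ) + 1 < n), i < j ∧ π ⟨(j : ℕ) + 1, h⟩ < π i ∧ π i < π j)) ∧
      (¬ (∃ (i k : Fin n) (h : (i : ℕ) + 1 < n), (i : ℕ) + 1 < (k : ℕ) ∧ π k < π ⟨(i : ℕ) + 1, h⟩ ∧ π ⟨(i : ℕ) + 1, h⟩ < π i))} = 2 := by
  have key (π : Perm (Fin n)) :
      AvoidsPatterns π ↔ π = zigzagPerm n ∨ complement π = zigzagPerm n := by
    rw [avoidsPatterns_iff hn, isZigzag_iff_eq_zigzagPerm, isZigzag_iff_eq_zigzagPerm]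
  refine ⟨fun π => (key π).trans (or_congr eq_zigzagPerm_iff complement_eq_zigzagPerm_iff), ?_⟩
  refine Set.ncard_eq_two.mpr ⟨zigzagPerm n, complement (zigzagPerm n),
    zigzagPerm_ne_complement hn, Set.ext fun π => (key π).trans ?_⟩
  rw [complement_involutive.eq_iff, Set.mem_insert_iff, Set.mem_singleton_iff]
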